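/- arXiv:1912.03925 — 4 statements merged into one kernel-verified Lean document; each statement's English description precedes it below -/
import Mathlib

section
/- Let F : ℝ^K → [0,∞) be differentiable, t_n ∈ ℕ, L_n > 0, and R > 0. Assume ‖∇F(a)‖_∞ ≤ L_n·R for all a with ‖a‖_∞ ≤ 2R, and ‖∇F(a₁) − ∇F(a₂)‖ ≤ L_n·‖a₁ − a₂‖ for all a₁, a₂ with ‖a₁‖_∞ ≤ 3R and ‖a₂‖_∞ ≤ 3R. Let a^{(0)} satisfy ‖a^{(0)}‖ ≤ R and √(2·t_n·F(a^{(0)})/L_n) ≤ R, and set a^{(t+1)} = a^{(t)} − (1/L_n)·∇F(a^{(t)}) for t = 0,…,t_n−1. Then ‖a^{(t)}‖_∞ ≤ 2R for all t ∈ {0,1,…,t_n}. -/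
/-!
Along a step `x ↦ x - L⁻¹ ∇F x` that starts in the sup-norm ball of radius `2R`, the gradient
bound keeps the whole step inside the ball of radius `3R`, where `∇F` is `L`-Lipschitz; the
descent lemma then gives the sufficient decrease `F(x⁺) + (L/2)‖x⁺ - x‖² ≤ F x`. Summing these
decreases and applying Cauchy–Schwarz to the path `a⁽⁰⁾, …, a⁽ᵗ⁾` gives
`‖a⁽ᵗ⁾ - a⁽⁰⁾‖² ≤ 2 t F(a⁽⁰⁾) / L ≤ R²`, so `‖a⁽ᵗ⁾‖ ≤ 2R`, and the induction goes on.
-/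

open Set Finset
open scoped RealInnerProductSpace Gradient

noncomputable def supNorm {K : ℕ} (a : EuclideanSpace ℝ (Fin K)) : ℝ :=
  ‖(WithLp.equiv 2 (Fin K → ℝ)) a‖

section Descent

variable {E : Type*} [NormedAddCommGroup E] [InnerProductSpace ℝ E] [CompleteSpace E]
  {f : E → ℝ}

theorem hasDerivAt_comp_add_smul {x v : E} {s : ℝ} (hf : DifferentiableAt ℝ f (x + s • v)) :
    HasDerivAt (fun s : ℝ ↦ f (x + s • v)) ⟪∇ f (x + s • v), v⟫ s := by
  have hline : HasDerivAt (fun s : ℝ ↦ x + s • v) v s := by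
    simpa using ((hasDerivAt_id s).smul_const v).const_add x
  rw [inner_gradient_left]
  exact hf.hasFDerivAt.comp_hasDerivAt s hline

theorem le_add_inner_add_of_norm_gradient_sub_le (hf : Differentiable ℝ f) {L : ℝ} {x v : E}
    (hgrad : ∀ s ∈ Icc (0 : ℝ) 1, ‖∇ f (x + s • v) - ∇ f x‖ ≤ L * s * ‖v‖) :
    f (x + v) ≤ f x + ⟪∇ f x, v⟫ + L / 2 * ‖v‖ ^ 2 := by
  set ψ : ℝ → ℝ := fun s ↦ f (x + s • v) - s * ⟪∇ f x, v⟫ - L / 2 * s ^ 2 * ‖v‖ ^ 2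
  have hψ : ∀ s, HasDerivAt ψ (⟪∇ f (x + s • v) - ∇ f x, v⟫ - L * s * ‖v‖ ^ 2) s := by
    intro s
    have := ((hasDerivAt_comp_add_smul (x := x) (v := v) (hf _)).sub
      ((hasDerivAt_id s).mul_const ⟪∇ f x, v⟫)).sub
      (((hasDerivAt_pow 2 s).const_mul (L / 2)).mul_const (‖v‖ ^ 2))
    refine this.congr_deriv ?_
    rw [inner_sub_left]
    simp only [Nat.cast_ofNat]
    ring
  have hanti : AntitoneOn ψ (Icc 0 1) := by
    refine antitoneOn_of_hasDerivWithinAt_nonpos (convex_Icc 0 1)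
      (fun s _ ↦ (hψ s).continuousAt.continuousWithinAt) (fun s _ ↦ (hψ s).hasDerivWithinAt) ?_
    rw [interior_Icc]
    intro s hs
    have := calc ⟪∇ f (x + s • v) - ∇ f x, v⟫ ≤ ‖∇ f (x + s • v) - ∇ f x‖ * ‖v‖ :=
          real_inner_le_norm _ _
      _ ≤ L * s * ‖v‖ * ‖v‖ := by gcongr; exact hgrad s (Ioo_subset_Icc_self hs)
    nlinarith
  have := hanti (left_mem_Icc.2 zero_le_one) (right_mem_Icc.2 zero_le_one) zero_le_one
  simp only [ψ, zero_smul, add_zero, one_smul, zero_mul, sub_zero, one_mul] at this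
  linarith

theorem add_mul_norm_sq_le_of_gradient_step (hf : Differentiable ℝ f) {L : ℝ} (hL : 0 < L)
    {x : E} (hgrad : ∀ s ∈ Icc (0 : ℝ) 1,
      ‖∇ f (x - (s / L) • ∇ f x) - ∇ f x‖ ≤ L * ‖(s / L) • ∇ f x‖) :
    f (x - L⁻¹ • ∇ f x) + L / 2 * ‖L⁻¹ • ∇ f x‖ ^ 2 ≤ f x := by
  have hdescent := le_add_inner_add_of_norm_gradient_sub_le hf (L := L) (v := -(L⁻¹ • ∇ f x))
    fun s hs ↦ by
      have h := hgrad s hs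
      rw [norm_smul, Real.norm_of_nonneg (div_nonneg hs.1 hL.le)] at h
      rw [smul_neg, smul_smul, ← sub_eq_add_neg, norm_neg, norm_smul,
        Real.norm_of_nonneg (inv_nonneg.2 hL.le)]
      convert h using 1
      rw [div_eq_mul_inv]
      ring
  rw [← sub_eq_add_neg, inner_neg_right, real_inner_smul_right, real_inner_self_eq_norm_sq,
    norm_neg] at hdescent
  rw [norm_smul, Real.norm_of_nonneg (inv_nonneg.2 hL.le)] at hdescent ⊢
  have : L / 2 * (L⁻¹ * ‖∇ f x‖) ^ 2 = L⁻¹ * ‖∇ f x‖ ^ 2 / 2 := by field_simp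
  linarith

end Descent

theorem mul_sq_dist_le_of_sufficient_decrease {α : Type*} [PseudoMetricSpace α] {x : ℕ → α}
    {u : ℕ → ℝ} {c : ℝ} (hc : 0 ≤ c) {n : ℕ}
    (h : ∀ k < n, u (k + 1) + c * dist (x k) (x (k + 1)) ^ 2 ≤ u k) :
    c * dist (x 0) (x n) ^ 2 ≤ n * (u 0 - u n) := by
  have hpath : dist (x 0) (x n) ^ 2 ≤ n * ∑ k ∈ range n, dist (x k) (x (k + 1)) ^ 2 :=
    calc dist (x 0) (x n) ^ 2 ≤ (∑ k ∈ range n, dist (x k) (x (k + 1))) ^ 2 := by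
          gcongr; exact dist_le_range_sum_dist x n
      _ ≤ n * ∑ k ∈ range n, dist (x k) (x (k + 1)) ^ 2 := by
          simpa using
            sq_sum_le_card_mul_sum_sq (s := range n) (f := fun k ↦ dist (x k) (x (k + 1)))
  have htelescope : c * ∑ k ∈ range n, dist (x k) (x (k + 1)) ^ 2 ≤ u 0 - u n := by
    rw [mul_sum, ← sum_range_sub']
    exact sum_le_sum fun k hk ↦ by linarith [h k (mem_range.1 hk)]
  calc c * dist (x 0) (x n) ^ 2 ≤ c * (n * ∑ k ∈ range n, dist (x k) (x (k + 1)) ^ 2) := by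
        gcongr
    _ = n * (c * ∑ k ∈ range n, dist (x k) (x (k + 1)) ^ 2) := by ring
    _ ≤ n * (u 0 - u n) := by gcongr

section SupNorm

variable {K : ℕ}

theorem supNorm_le_norm (a : EuclideanSpace ℝ (Fin K)) : supNorm a ≤ ‖a‖ := by
  simpa [supNorm, dist_zero_right] using
    (PiLp.lipschitzWith_ofLp 2 (fun _ : Fin K ↦ ℝ)).dist_le_mul a 0

theorem supNorm_sub_le (x y : EuclideanSpace ℝ (Fin K)) :
    supNorm (x - y) ≤ supNorm x + supNorm y := by
  simpa [supNorm] using norm_sub_le x.ofLp y.ofLp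

theorem supNorm_smul (c : ℝ) (x : EuclideanSpace ℝ (Fin K)) :
    supNorm (c • x) = |c| * supNorm x := by
  simp [supNorm, norm_smul]

theorem add_mul_norm_sq_le_of_supNorm_le {F : EuclideanSpace ℝ (Fin K) → ℝ}
    (hF : Differentiable ℝ F) {L R : ℝ} (hL : 0 < L)
    (hgradLip : ∀ a₁ a₂ : EuclideanSpace ℝ (Fin K), supNorm a₁ ≤ 3 * R → supNorm a₂ ≤ 3 * R →
      ‖∇ F a₁ - ∇ F a₂‖ ≤ L * ‖a₁ - a₂‖)
    {x : EuclideanSpace ℝ (Fin K)} (hx : supNorm x ≤ 2 * R) (hgx : supNorm (∇ F x) ≤ L * R) :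
    F (x - L⁻¹ • ∇ F x) + L / 2 * ‖L⁻¹ • ∇ F x‖ ^ 2 ≤ F x := by
  refine add_mul_norm_sq_le_of_gradient_step hF hL fun s hs ↦ ?_
  have hstep : supNorm ((s / L) • ∇ F x) ≤ R :=
    calc supNorm ((s / L) • ∇ F x) = s / L * supNorm (∇ F x) := by
          rw [supNorm_smul, abs_of_nonneg (div_nonneg hs.1 hL.le)]
      _ ≤ 1 / L * (L * R) := by gcongr; exacts [norm_nonneg _, hs.2]
      _ = R := by field_simp
  have hR : 0 ≤ R := (norm_nonneg _).trans hstep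
  have hmoved : supNorm (x - (s / L) • ∇ F x) ≤ 3 * R := by
    linarith [supNorm_sub_le x ((s / L) • ∇ F x)]
  simpa using hgradLip _ x hmoved (by linarith)

end SupNorm

theorem stmt_2_general {K : ℕ} (F : EuclideanSpace ℝ (Fin K) → ℝ) (hF : Differentiable ℝ F)
    (hFpos : ∀ x, 0 ≤ F x)
    (tn : ℕ) (Ln R : ℝ) (hLn : 0 < Ln)
    (hgradBound : ∀ a : EuclideanSpace ℝ (Fin K), supNorm a ≤ 2 * R →
      supNorm (gradient F a) ≤ Ln * R)
    (hgradLip : ∀ a₁ a₂ : EuclideanSpace ℝ (Fin K),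
      supNorm a₁ ≤ 3 * R → supNorm a₂ ≤ 3 * R →
      ‖gradient F a₁ - gradient F a₂‖ ≤ Ln * ‖a₁ - a₂‖)
    (a : ℕ → EuclideanSpace ℝ (Fin K))
    (ha0 : ‖a 0‖ ≤ R)
    (ha0' : Real.sqrt (2 * tn * F (a 0) / Ln) ≤ R)
    (hrec : ∀ t < tn, a (t + 1) = a t - (1 / Ln) • gradient F (a t)) :
    ∀ t ≤ tn, supNorm (a t) ≤ 2 * R := by
  intro t ht
  induction t using Nat.strong_induction_on with
  | _ t ih =>
    have hdecrease : ∀ k < t, F (a (k + 1)) + Ln / 2 * dist (a k) (a (k + 1)) ^ 2 ≤ F (a k) := by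
      intro k hk
      have hak := ih k hk (by omega)
      rw [hrec k (by omega), dist_eq_norm, sub_sub_cancel, one_div]
      exact add_mul_norm_sq_le_of_supNorm_le hF hLn hgradLip hak (hgradBound _ hak)
    have hsq := mul_sq_dist_le_of_sufficient_decrease (u := fun k ↦ F (a k)) (c := Ln / 2)
      (by positivity) hdecrease
    have hdist : dist (a 0) (a t) ≤ R := by
      refine le_trans ?_ ha0'
      rw [Real.le_sqrt dist_nonneg (by have := hFpos (a 0); positivity), le_div_iff₀ hLn]
      have : (t : ℝ) ≤ tn := by exact_mod_cast ht
      nlinarith [hFpos (a 0), hFpos (a t)]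
    calc supNorm (a t) ≤ ‖a t‖ := supNorm_le_norm _
      _ ≤ ‖a 0‖ + dist (a 0) (a t) := dist_eq_norm (a 0) (a t) ▸ norm_le_norm_add_norm_sub _ _
      _ ≤ 2 * R := by linarith

/-- Gradient-descent iterates with step size `1/Lₙ` stay bounded (Lemma 4). -/
theorem stmt_2 {K : ℕ} (F : EuclideanSpace ℝ (Fin K) → ℝ) (hF : Differentiable ℝ F)
    (hFpos : ∀ x, 0 ≤ F x)
    (tn : ℕ) (Ln R : ℝ) (hLn : 0 < Ln) (hR : 0 < R)
    (hgradBound : ∀ a : EuclideanSpace ℝ (Fin K), supNorm a ≤ 2 * R →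
      supNorm (gradient F a) ≤ Ln * R)
    (hgradLip : ∀ a₁ a₂ : EuclideanSpace ℝ (Fin K),
      supNorm a₁ ≤ 3 * R → supNorm a₂ ≤ 3 * R →
      ‖gradient F a₁ - gradient F a₂‖ ≤ Ln * ‖a₁ - a₂‖)
    (a : ℕ → EuclideanSpace ℝ (Fin K))
    (ha0 : ‖a 0‖ ≤ R)
    (ha0' : Real.sqrt (2 * tn * F (a 0) / Ln) ≤ R)
    (hrec : ∀ t < tn, a (t + 1) = a t - (1 / Ln) • gradient F (a t)) :
    ∀ t ≤ tn, supNorm (a t) ≤ 2 * R :=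
  stmt_2_general F hF hFpos tn Ln R hLn hgradBound hgradLip a ha0 ha0' hrec
end

section
/- Let σ be the logistic squasher and let f_c, f_{c̄} be deep feedforward networks with L hidden layers of width k₀ each, built recursively via f_{k,i}^{(r)}(x) = σ(Σ_{j=1}^{k₀} c_{k,i,j}^{(r−1)} f_{k,j}^{(r−1)}(x) + c_{k,i,0}^{(r−1)}) from weights c and c̄ respectively. Then for any k and any x ∈ ℝ^d: |f_{k,k}^{(L)}(x) − f̄_{k,k}^{(L)}(x)| ≤ (2k₀+1)^L · (max{‖c‖_∞, ‖x‖_∞, 1})^L · max_{i,j,s: s<L} |c_{k,i,j}^{(s)} − c̄_{k,i,j}^{(s)}|. -/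
/-!
Write `a u - b v = a (u - v) + (a - b) v` in every neuron and use that the logistic function is
1-Lipschitz with values in `[0, 1]`. With `B = max (max C ‖x‖) 1`, the error `E r` in layer `r`
then satisfies `E 0 ≤ d M B + M ≤ (2 k₀ + 1) B M` and
`E (r + 1) ≤ k₀ (B E r + M) + M ≤ (2 k₀ + 1) B E r`, because `M ≤ E r ≤ B E r`; hence
`E r ≤ ((2 k₀ + 1) B) ^ (r + 1) M`.
-/

/-- The logistic squasher. -/
noncomputable def logistic (x : ℝ) : ℝ := 1 / (1 + Real.exp (-x))

/-- A fully connected feedforward logistic network with `d` inputs and hidden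
layers of width `k₀`:  `net d k₀ w w0 c c0 (r-1) i x` is the output `f_i^{(r)}(x)`
of the `i`-th neuron in layer `r`, where `w, w0` are the first-layer weights
(`c^{(0)}`) and `c r, c0 r` are the weights `c^{(r)}` feeding layer `r+1`. -/
noncomputable def net (d k₀ : ℕ) (w : Fin k₀ → Fin d → ℝ) (w0 : Fin k₀ → ℝ)
    (c : ℕ → Fin k₀ → Fin k₀ → ℝ) (c0 : ℕ → Fin k₀ → ℝ) :
    ℕ → Fin k₀ → (Fin d → ℝ) → ℝ
  | 0, i, x => logistic (∑ j, w i j * x j + w0 i)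
  | (r + 1), i, x =>
      logistic (∑ j, c (r + 1) i j * net d k₀ w w0 c c0 r j x + c0 (r + 1) i)

theorem logistic_eq_sigmoid : logistic = Real.sigmoid := by
  funext x
  rw [logistic, Real.sigmoid_def, one_div]

theorem lipschitzWith_sigmoid : LipschitzWith 1 Real.sigmoid := by
  refine lipschitzWith_of_nnnorm_deriv_le differentiable_sigmoid fun x => ?_
  rw [← NNReal.coe_le_coe, coe_nnnorm, Real.deriv_sigmoid, Real.norm_eq_abs, NNReal.coe_one,
    abs_of_nonneg (mul_nonneg (Real.sigmoid_nonneg x) (by linarith [Real.sigmoid_le_one x]))]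
  nlinarith [Real.sigmoid_nonneg x, Real.sigmoid_le_one x]

theorem abs_logistic_sub_logistic_le (a b : ℝ) : |logistic a - logistic b| ≤ |a - b| := by
  simpa [logistic_eq_sigmoid, Real.dist_eq] using lipschitzWith_sigmoid.dist_le_mul a b

theorem abs_logistic_le_one (a : ℝ) : |logistic a| ≤ 1 := by
  rw [logistic_eq_sigmoid, abs_of_nonneg (Real.sigmoid_nonneg a)]
  exact Real.sigmoid_le_one a

section SumBounds

variable {ι : Type*} [Fintype ι] {A E M V : ℝ}

theorem abs_sum_mul_sub_sum_mul_same_le (a b u : ι → ℝ) (hab : ∀ j, |a j - b j| ≤ M)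
    (hu : ∀ j, |u j| ≤ V) :
    |∑ j, a j * u j - ∑ j, b j * u j| ≤ Fintype.card ι * (M * V) := by
  rw [← Finset.sum_sub_distrib]
  refine (Finset.abs_sum_le_sum_abs _ _).trans ?_
  refine (Finset.sum_le_card_nsmul _ _ (M * V) fun j _ => ?_).trans_eq (nsmul_eq_mul _ _)
  rw [← sub_mul, abs_mul]
  exact mul_le_mul (hab j) (hu j) (abs_nonneg _) ((abs_nonneg _).trans (hab j))

theorem abs_sum_mul_sub_sum_mul_le (a b u v : ι → ℝ) (ha : ∀ j, |a j| ≤ A)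
    (huv : ∀ j, |u j - v j| ≤ E) (hab : ∀ j, |a j - b j| ≤ M) (hv : ∀ j, |v j| ≤ V) :
    |∑ j, a j * u j - ∑ j, b j * v j| ≤ Fintype.card ι * (A * E + M * V) := by
  rw [← Finset.sum_sub_distrib]
  refine (Finset.abs_sum_le_sum_abs _ _).trans ?_
  refine (Finset.sum_le_card_nsmul _ _ _ fun j _ => ?_).trans_eq (nsmul_eq_mul _ _)
  calc |a j * u j - b j * v j| = |a j * (u j - v j) + (a j - b j) * v j| := by ring_nf
    _ ≤ |a j| * |u j - v j| + |a j - b j| * |v j| := by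
      rw [← abs_mul, ← abs_mul]; exact abs_add_le _ _
    _ ≤ A * E + M * V :=
      add_le_add (mul_le_mul (ha j) (huv j) (abs_nonneg _) ((abs_nonneg _).trans (ha j)))
        (mul_le_mul (hab j) (hv j) (abs_nonneg _) ((abs_nonneg _).trans (hab j)))

end SumBounds

section Net

variable {d k₀ : ℕ} {w wbar : Fin k₀ → Fin d → ℝ} {w0 w0bar : Fin k₀ → ℝ}
  {c cbar : ℕ → Fin k₀ → Fin k₀ → ℝ} {c0 c0bar : ℕ → Fin k₀ → ℝ} {x : Fin d → ℝ} {B M : ℝ}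

theorem abs_net_le_one (r : ℕ) (i : Fin k₀) : |net d k₀ w w0 c c0 r i x| ≤ 1 := by
  cases r <;> exact abs_logistic_le_one _

theorem abs_net_zero_sub_le (i : Fin k₀) (hw : ∀ j, |w i j - wbar i j| ≤ M)
    (hw0 : |w0 i - w0bar i| ≤ M) (hx : ∀ j, |x j| ≤ B) :
    |net d k₀ w w0 c c0 0 i x - net d k₀ wbar w0bar cbar c0bar 0 i x| ≤ d * (M * B) + M := by
  refine (abs_logistic_sub_logistic_le _ _).trans ?_
  rw [add_sub_add_comm]
  refine (abs_add_le _ _).trans (add_le_add ?_ hw0)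
  simpa using abs_sum_mul_sub_sum_mul_same_le (w i) (wbar i) x hw hx

theorem abs_net_succ_sub_le {E : ℝ} (r : ℕ) (i : Fin k₀) (hc : ∀ j, |c (r + 1) i j| ≤ B)
    (hcbar : ∀ j, |c (r + 1) i j - cbar (r + 1) i j| ≤ M)
    (hc0 : |c0 (r + 1) i - c0bar (r + 1) i| ≤ M)
    (hE : ∀ j, |net d k₀ w w0 c c0 r j x - net d k₀ wbar w0bar cbar c0bar r j x| ≤ E) :
    |net d k₀ w w0 c c0 (r + 1) i x - net d k₀ wbar w0bar cbar c0bar (r + 1) i x|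
      ≤ k₀ * (B * E + M) + M := by
  refine (abs_logistic_sub_logistic_le _ _).trans ?_
  rw [add_sub_add_comm]
  refine (abs_add_le _ _).trans (add_le_add ?_ hc0)
  simpa using abs_sum_mul_sub_sum_mul_le _ _ _ _ hc hE hcbar fun j => abs_net_le_one r j

theorem abs_net_sub_le_pow (n : ℕ) (hd : d ≤ 2 * k₀) (hB : 1 ≤ B) (hx : ∀ j, |x j| ≤ B)
    (hw : ∀ i j, |w i j - wbar i j| ≤ M) (hw0 : ∀ i, |w0 i - w0bar i| ≤ M)
    (hc : ∀ r, 1 ≤ r → r ≤ n → ∀ i j, |c r i j| ≤ B)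
    (hcbar : ∀ r, 1 ≤ r → r ≤ n → ∀ i j, |c r i j - cbar r i j| ≤ M)
    (hc0 : ∀ r, 1 ≤ r → r ≤ n → ∀ i, |c0 r i - c0bar r i| ≤ M) :
    ∀ r ≤ n, ∀ i, |net d k₀ w w0 c c0 r i x - net d k₀ wbar w0bar cbar c0bar r i x|
      ≤ ((2 * k₀ + 1) * B) ^ (r + 1) * M := by
  have hK : 1 ≤ (2 * k₀ + 1) * B :=
    one_le_mul_of_one_le_of_one_le (by linarith [k₀.cast_nonneg (α := ℝ)]) hB
  intro r
  induction r with
  | zero =>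
    intro _ i
    have hM : 0 ≤ M := (abs_nonneg _).trans (hw0 i)
    have hd' : (d : ℝ) ≤ 2 * k₀ := by exact_mod_cast hd
    refine (abs_net_zero_sub_le i (hw i) (hw0 i) hx).trans ?_
    rw [zero_add, pow_one]
    nlinarith [mul_le_mul_of_nonneg_right hd' (mul_nonneg hM (zero_le_one.trans hB)),
      le_mul_of_one_le_right hM hB]
  | succ r ih =>
    intro hr i
    have hM : 0 ≤ M := (abs_nonneg _).trans (hc0 (r + 1) r.succ_pos hr i)
    set E := ((2 * k₀ + 1) * B) ^ (r + 1) * M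
    have hME : M ≤ E := le_mul_of_one_le_left hM (one_le_pow₀ hK)
    refine (abs_net_succ_sub_le r i (hc _ r.succ_pos hr i) (hcbar _ r.succ_pos hr i)
      (hc0 _ r.succ_pos hr i) (ih (by omega))).trans ?_
    rw [pow_succ, mul_right_comm]
    nlinarith [k₀.cast_nonneg (α := ℝ), mul_le_mul_of_nonneg_right hB (hM.trans hME)]

end Net

theorem stmt_7_general (d k₀ L : ℕ) (hL : 1 ≤ L) (hk₀ : d ≤ 2 * k₀)
    (w wbar : Fin k₀ → Fin d → ℝ) (w0 w0bar : Fin k₀ → ℝ)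
    (c cbar : ℕ → Fin k₀ → Fin k₀ → ℝ) (c0 c0bar : ℕ → Fin k₀ → ℝ)
    (C M : ℝ)
    (hCc : ∀ r, 1 ≤ r → r ≤ L - 1 → ∀ i j, |c r i j| ≤ C)
    (hMw : ∀ i j, |w i j - wbar i j| ≤ M) (hMw0 : ∀ i, |w0 i - w0bar i| ≤ M)
    (hMc : ∀ r, 1 ≤ r → r ≤ L - 1 → ∀ i j, |c r i j - cbar r i j| ≤ M)
    (hMc0 : ∀ r, 1 ≤ r → r ≤ L - 1 → ∀ i, |c0 r i - c0bar r i| ≤ M)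
    (k : Fin k₀) (x : Fin d → ℝ) :
    |net d k₀ w w0 c c0 (L - 1) k x - net d k₀ wbar w0bar cbar c0bar (L - 1) k x|
      ≤ (2 * k₀ + 1) ^ L * (max (max C ‖x‖) 1) ^ L * M := by
  set B := max (max C ‖x‖) 1
  have hCB : C ≤ B := (le_max_left _ _).trans (le_max_left _ _)
  have hxB : ∀ j, |x j| ≤ B := fun j =>
    (norm_le_pi_norm x j).trans ((le_max_right _ _).trans (le_max_left _ _))
  have h := abs_net_sub_le_pow (L - 1) hk₀ (le_max_right _ _) hxB hMw hMw0
    (fun r hr hrL i j => (hCc r hr hrL i j).trans hCB) hMc hMc0 (L - 1) le_rfl k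
  rwa [Nat.sub_add_cancel hL, mul_pow] at h

/-- Lemma 5 a): Lipschitz dependence of a deep logistic network on its
weights.  `C` bounds the sup norm of the weights and `M` bounds the sup norm
of the difference of the two weight vectors. -/
theorem stmt_7 (d k₀ L : ℕ) (hL : 1 ≤ L) (hk₀ : d ≤ 2 * k₀)
    (w wbar : Fin k₀ → Fin d → ℝ) (w0 w0bar : Fin k₀ → ℝ)
    (c cbar : ℕ → Fin k₀ → Fin k₀ → ℝ) (c0 c0bar : ℕ → Fin k₀ → ℝ)
    (C M : ℝ)
    (hCw : ∀ i j, |w i j| ≤ C) (hCw0 : ∀ i, |w0 i| ≤ C)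
    (hCc : ∀ r, 1 ≤ r → r ≤ L - 1 → ∀ i j, |c r i j| ≤ C)
    (hCc0 : ∀ r, 1 ≤ r → r ≤ L - 1 → ∀ i, |c0 r i| ≤ C)
    (hMw : ∀ i j, |w i j - wbar i j| ≤ M) (hMw0 : ∀ i, |w0 i - w0bar i| ≤ M)
    (hMc : ∀ r, 1 ≤ r → r ≤ L - 1 → ∀ i j, |c r i j - cbar r i j| ≤ M)
    (hMc0 : ∀ r, 1 ≤ r → r ≤ L - 1 → ∀ i, |c0 r i - c0bar r i| ≤ M)
    (k : Fin k₀) (x : Fin d → ℝ) :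
    |net d k₀ w w0 c c0 (L - 1) k x - net d k₀ wbar w0bar cbar c0bar (L - 1) k x|
      ≤ (2 * k₀ + 1) ^ L * (max (max C ‖x‖) 1) ^ L * M :=
  stmt_7_general d k₀ L hL hk₀ w wbar w0 w0bar c cbar c0 c0bar C M hCc hMw hMw0 hMc hMc0 k x
end

section
/- Let n ∈ ℕ, (x₁,y₁),…,(x_n,y_n) ∈ ℝ^d × ℝ, f : ℝ^d → ℝ, κ > 0, and suppose (1/n)Σᵢ|f(xᵢ)−yᵢ|² ≤ min_{g:ℝ^d→ℝ} (1/n)Σᵢ|g(xᵢ)−yᵢ|² + κ. Define m̄(x) = (Σᵢ yᵢ·1_{xᵢ=x})/(Σᵢ 1_{xᵢ=x}) with convention 0/0 = 0. Then |f(xᵢ) − m̄(xᵢ)| ≤ √(n·κ) for every i ∈ {1,…,n}. -/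
/-!
The residual `m̄(xᵢ) - yᵢ` sums to zero over every fibre `{i | xᵢ = z}`, so it is orthogonal
to every function of the inputs. Hence the empirical risk of any `g` splits as
`Σ (g(xᵢ) - m̄(xᵢ))² + Σ (m̄(xᵢ) - yᵢ)²`. Comparing `f` with `g = m̄` bounds the first sum
for `f` by `n κ`, and each of its terms is at most the sum.
-/

/-- The empirical conditional mean `m̄` of the data (with the convention 0/0 = 0,
which is automatic for real division). -/
noncomputable def empMean {n d : ℕ} (x : Fin n → Fin d → ℝ) (y : Fin n → ℝ)
    (z : Fin d → ℝ) : ℝ :=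
  (∑ i, if x i = z then y i else 0) / (∑ i, if x i = z then (1:ℝ) else 0)

open Finset

section EmpiricalMean

variable {n d : ℕ} (x : Fin n → Fin d → ℝ) (y : Fin n → ℝ)

lemma card_fiber_mul_empMean (z : Fin d → ℝ) :
    (#{i | x i = z} : ℝ) * empMean x y z = ∑ i with x i = z, y i := by
  rw [empMean, sum_boole, ← sum_filter]
  refine mul_div_cancel_of_imp' fun h => ?_
  rw [Nat.cast_eq_zero, card_eq_zero] at h
  rw [h, sum_empty]

lemma sum_mul_empMean_sub_eq_zero (c : (Fin d → ℝ) → ℝ) :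
    ∑ i, c (x i) * (empMean x y (x i) - y i) = 0 := by
  rw [← sum_fiberwise_of_maps_to (t := univ.image x) fun i _ => mem_image_of_mem x (mem_univ i)]
  refine sum_eq_zero fun z _ => ?_
  calc ∑ i with x i = z, c (x i) * (empMean x y (x i) - y i)
      = ∑ i with x i = z, c z * (empMean x y z - y i) :=
        sum_congr rfl fun i hi => by rw [(mem_filter.mp hi).2]
    _ = c z * ((#{i | x i = z} : ℝ) * empMean x y z - ∑ i with x i = z, y i) := by
        rw [← mul_sum, sum_sub_distrib, sum_const, nsmul_eq_mul]
    _ = 0 := by rw [card_fiber_mul_empMean, sub_self, mul_zero]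

lemma sum_sq_sub_eq_sum_sq_sub_empMean_add (g : (Fin d → ℝ) → ℝ) :
    ∑ i, (g (x i) - y i) ^ 2
      = ∑ i, (g (x i) - empMean x y (x i)) ^ 2 + ∑ i, (empMean x y (x i) - y i) ^ 2 := by
  have h := sum_mul_empMean_sub_eq_zero x y fun z => 2 * (g z - empMean x y z)
  rw [← sum_add_distrib, ← sub_eq_zero, ← sum_sub_distrib, ← h]
  exact sum_congr rfl fun i _ => by ring

end EmpiricalMean

theorem stmt_10_general (n d : ℕ) (x : Fin n → Fin d → ℝ) (y : Fin n → ℝ)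
    (f : (Fin d → ℝ) → ℝ) (κ : ℝ)
    (hf : ∀ g : (Fin d → ℝ) → ℝ,
      (1 / n) * ∑ i, |f (x i) - y i| ^ 2
        ≤ (1 / n) * ∑ i, |g (x i) - y i| ^ 2 + κ) :
    ∀ i, |f (x i) - empMean x y (x i)| ≤ Real.sqrt (n * κ) := by
  intro i
  have hn : (0 : ℝ) < n := by exact_mod_cast i.pos
  have hrisk : ∑ j, (f (x j) - y j) ^ 2 ≤ ∑ j, (empMean x y (x j) - y j) ^ 2 + n * κ := by
    have h := hf (empMean x y)
    simp only [sq_abs] at h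
    rw [← mul_le_mul_iff_of_pos_left (one_div_pos.mpr hn), mul_add, ← mul_assoc,
      one_div_mul_cancel hn.ne', one_mul]
    exact h
  have hdist : ∑ j, (f (x j) - empMean x y (x j)) ^ 2 ≤ n * κ := by
    linarith [sum_sq_sub_eq_sum_sq_sub_empMean_add x y f]
  refine Real.abs_le_sqrt (le_trans ?_ hdist)
  exact single_le_sum (f := fun j => (f (x j) - empMean x y (x j)) ^ 2) (fun j _ => sq_nonneg _)
    (mem_univ i)

/-- Lemma 9: a near-minimizer of the empirical L₂ risk is pointwise close to
the empirical conditional mean at each data point. -/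
theorem stmt_10 (n d : ℕ) (x : Fin n → Fin d → ℝ) (y : Fin n → ℝ)
    (f : (Fin d → ℝ) → ℝ) (κ : ℝ) (hκ : 0 < κ)
    (hf : ∀ g : (Fin d → ℝ) → ℝ,
      (1 / n) * ∑ i, |f (x i) - y i| ^ 2
        ≤ (1 / n) * ∑ i, |g (x i) - y i| ^ 2 + κ) :
    ∀ i, |f (x i) - empMean x y (x i)| ≤ Real.sqrt (n * κ) :=
  stmt_10_general n d x y f κ hf
end

section
/- Let X₁,…,X_n be i.i.d. with P[X = x_k] = 1/n for k = 1,…,n, where x₁,…,x_n are distinct points. Then Σ_{k=1}^n (1/n)·E[ 1/N_k · 1_{N_k > 0} ] ≥ (n/(n+1))·(1 − ((2n+1)/n)·(1 − 1/n)^n), where N_k = Σ_{i=1}^n 1_{X_i = x_k}. In particular this is at least (10/11)·(1 − (21/10)·(1/e)) for n ≥ 10. -/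
/-!
Each count `N_k = #{i | X_i = x_k}` counts `n` independent events of probability `p = 1/n`, so it
has law `Bin(n, p)`. Pointwise `1/j · 1_{j>0} ≥ 1/(j+1) - 1_{j=0}`, hence
`E[1/N_k · 1_{N_k>0}] ≥ E[1/(N_k+1)] - (1-p)^n`; and the absorption identity
`(n+1) C(n,j) = (j+1) C(n+1,j+1)` turns `E[1/(N_k+1)]` into a binomial sum for `n+1` trials,
equal to `(1 - (1-p)^(n+1)) / ((n+1)p)`. At `p = 1/n` this is the first bound; the second follows
from `(1 - 1/n)^n ≤ 1/e` and `e > 2.7`.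
-/

open scoped Classical

open MeasureTheory ProbabilityTheory

open Finset unitInterval

-- `(0 : ℝ)⁻¹ = 0` absorbs the indicator.
lemma Nat.ite_pos_one_div_eq_inv (m : ℕ) : (if 0 < m then (1 : ℝ) / m else 0) = (m : ℝ)⁻¹ := by
  rcases m.eq_zero_or_pos with rfl | hm
  · simp
  · rw [if_pos hm, one_div]

namespace ProbabilityTheory

variable {Ω ι : Type*}

lemma setOf_filter_mem_eq_iInter [Fintype ι] (A : ι → Set Ω) (S : Finset ι) :
    {ω | ({i | ω ∈ A i} : Finset ι) = S} = ⋂ i, if i ∈ S then A i else (A i)ᶜ := by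
  ext ω
  simp only [Set.mem_ofPred_eq, Set.mem_iInter, Finset.ext_iff, mem_filter, mem_univ, true_and]
  refine forall_congr' fun i ↦ ?_
  split_ifs with hi <;> simp [hi]

variable [MeasurableSpace Ω] {P : Measure Ω}

lemma iIndepFun.iIndepSet_preimage {β : Type*} [MeasurableSpace β] {X : ι → Ω → β}
    (hX : iIndepFun X P) {s : ι → Set β} (hs : ∀ i, MeasurableSet (s i)) :
    iIndepSet (fun i ↦ X i ⁻¹' s i) P :=
  (iIndepSet_iff_iIndep _ _).2 <| iIndep_of_iIndep_of_le hX fun i ↦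
    MeasurableSpace.generateFrom_le fun _ ht ↦
      (Set.mem_singleton_iff.1 ht) ▸ ⟨s i, hs i, rfl⟩

variable [Fintype ι] {A : ι → Set Ω} {p : I}

lemma measurableSet_setOf_filter_mem_eq (hAm : ∀ i, MeasurableSet (A i)) (S : Finset ι) :
    MeasurableSet {ω | ({i | ω ∈ A i} : Finset ι) = S} := by
  rw [setOf_filter_mem_eq_iInter]
  exact .iInter fun i ↦ by split_ifs; exacts [hAm i, (hAm i).compl]

lemma iIndepSet.measureReal_setOf_filter_mem_eq (hAm : ∀ i, MeasurableSet (A i))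
    (hA : iIndepSet A P) (hp : ∀ i, P.real (A i) = p) (S : Finset ι) :
    P.real {ω | ({i | ω ∈ A i} : Finset ι) = S} =
      p ^ #S * (1 - p) ^ (Fintype.card ι - #S) := by
  have hmeas : ∀ i, MeasurableSet[MeasurableSpace.generateFrom {A i}]
      (if i ∈ S then A i else (A i)ᶜ) := fun i ↦ by
    have := MeasurableSpace.measurableSet_generateFrom (Set.mem_singleton (A i))
    split_ifs
    exacts [this, this.compl]
  have := hA.isProbabilityMeasure
  rw [setOf_filter_mem_eq_iInter, measureReal_def,
    ((iIndepSet_iff_iIndep _ _).1 hA).meas_iInter hmeas, ENNReal.toReal_prod]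
  have hfactor : ∀ i, (P (if i ∈ S then A i else (A i)ᶜ)).toReal =
      if i ∈ S then (p : ℝ) else 1 - p :=
    fun i ↦ by split_ifs <;> simp [← measureReal_def, measureReal_compl (hAm i), hp]
  rw [prod_congr rfl fun i _ ↦ hfactor i, prod_ite, prod_const, prod_const, filter_mem_eq_inter,
    univ_inter, filter_not, filter_mem_eq_inter, univ_inter, card_sdiff, inter_univ, card_univ]

lemma iIndepSet.hasLaw_card_binomial (hAm : ∀ i, MeasurableSet (A i)) (hA : iIndepSet A P)
    (hp : ∀ i, P.real (A i) = p) :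
    HasLaw (fun ω ↦ #({i | ω ∈ A i} : Finset ι)) Bin(Fintype.card ι, p) P := by
  have := hA.isProbabilityMeasure
  have hmeas : Measurable fun ω ↦ #({i | ω ∈ A i} : Finset ι) := by
    simp only [card_filter]
    exact measurable_sum _ fun i _ ↦ Measurable.ite (hAm i) measurable_const measurable_const
  refine ⟨hmeas.aemeasurable, Measure.ext_of_singleton fun k ↦ ?_⟩
  rw [← ENNReal.toReal_eq_toReal_iff' (measure_ne_top _ _) (measure_ne_top _ _),
    ← measureReal_def, ← measureReal_def, binomial_real_singleton,
    map_measureReal_apply hmeas (measurableSet_singleton k)]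
  have hfib : (fun ω ↦ #({i | ω ∈ A i} : Finset ι)) ⁻¹' {k} =
      ⋃ S ∈ powersetCard k univ, {ω | ({i | ω ∈ A i} : Finset ι) = S} := by
    ext ω; simp [eq_comm]
  rw [hfib, measureReal_biUnion_finset]
  · rw [sum_congr rfl fun S hS ↦ by
      rw [hA.measureReal_setOf_filter_mem_eq hAm hp, (mem_powersetCard.1 hS).2]]
    simp [mul_assoc]
  · intro S _ T _ hST
    exact Set.disjoint_left.2 fun ω hS hT ↦ hST (hS.symm.trans hT)
  · exact fun S _ ↦ measurableSet_setOf_filter_mem_eq hAm S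

lemma integral_binomial_inv_succ (n : ℕ) (p : I) (hp : (p : ℝ) ≠ 0) :
    ∫ k, ((k : ℝ) + 1)⁻¹ ∂Bin(n, p) = (1 - (1 - p) ^ (n + 1)) / ((n + 1) * p) := by
  rw [integral_binomial, ← Nat.range_succ_eq_Iic, eq_div_iff (by positivity), sum_mul]
  have hterm : ∀ k ∈ range (n + 1), (n.choose k * (p : ℝ) ^ k * (1 - p) ^ (n - k)) •
      ((k : ℝ) + 1)⁻¹ * ((n + 1) * p) =
      (p : ℝ) ^ (k + 1) * (1 - p) ^ (n - k) * (n + 1).choose (k + 1) := fun k _ ↦ by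
    have hchoose : ((n + 1).choose (k + 1) : ℝ) * (k + 1) = (n + 1) * n.choose k := by
      exact_mod_cast (Nat.add_one_mul_choose_eq n k).symm
    calc _ = (n + 1) * n.choose k * ((k : ℝ) + 1)⁻¹ *
          ((p : ℝ) ^ k * p * (1 - p) ^ (n - k)) := by rw [smul_eq_mul]; ring
      _ = _ := by rw [← hchoose, mul_inv_cancel_right₀ (by positivity)]; ring
  have hbinom := add_pow (p : ℝ) (1 - p) (n + 1)
  rw [sum_range_succ'] at hbinom
  simp only [add_sub_cancel, one_pow, Nat.add_sub_add_right, pow_zero,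
    Nat.sub_zero, Nat.choose_zero_right, Nat.cast_one, one_mul, mul_one] at hbinom
  rw [sum_congr rfl hterm]
  linarith

lemma integral_binomial_inv_ge (n : ℕ) (p : I) (hp : (p : ℝ) ≠ 0) :
    (1 - (1 - p : ℝ) ^ (n + 1)) / ((n + 1) * p) - (1 - p : ℝ) ^ n ≤
      ∫ k, (k : ℝ)⁻¹ ∂Bin(n, p) := by
  have hpt : ∀ k : ℕ, ((k : ℝ) + 1)⁻¹ - Set.indicator {0} 1 k ≤ (k : ℝ)⁻¹ := by
    rintro (_ | k)
    · simp
    · rw [Set.indicator_of_notMem (by simp), sub_zero]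
      exact inv_anti₀ (by positivity) (by simp)
  rw [← integral_binomial_inv_succ n p hp, ← binomial_real_zero n p,
    ← integral_indicator_one (measurableSet_singleton 0),
    ← integral_sub (integrable_binomial _) (integrable_binomial _)]
  exact integral_mono (integrable_binomial _) (integrable_binomial _) hpt

lemma integral_binomial_inv_ge_of_eq_one_div (n : ℕ) (hn : 1 ≤ n) (p : I)
    (hp : (p : ℝ) = 1 / n) :
    (n / (n + 1) : ℝ) * (1 - ((2 * n + 1) / n) * (1 - 1 / n) ^ n) ≤
      ∫ k, (k : ℝ)⁻¹ ∂Bin(n, p) := by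
  refine le_trans ?_ (integral_binomial_inv_ge n p (by simp [hp]; omega))
  have hn0 : (0 : ℝ) < n := by norm_cast
  set q : ℝ := 1 - 1 / n with hq
  have hgap : (1 - q ^ (n + 1)) / ((n + 1) * (1 / n)) - q ^ n -
      (n / (n + 1) : ℝ) * (1 - ((2 * n + 1) / n) * q ^ n) = q ^ n / (n + 1) := by
    rw [pow_succ, hq]
    field_simp
    ring
  have hq0 : 0 ≤ q := by rw [hq, sub_nonneg, div_le_one hn0]; exact_mod_cast hn
  rw [hp]
  linarith [div_nonneg (pow_nonneg hq0 n) (by positivity : (0 : ℝ) ≤ n + 1)]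

lemma ten_div_eleven_mul_le (n : ℕ) (hn : 10 ≤ n) :
    (10 / 11) * (1 - (21 / 10) * (1 / Real.exp 1)) ≤
      (n / (n + 1) : ℝ) * (1 - ((2 * n + 1) / n) * (1 - 1 / n) ^ n) := by
  have hn0 : (0 : ℝ) < n := by norm_cast; omega
  have hn10 : (10 : ℝ) ≤ n := by exact_mod_cast hn
  have hpow : (1 - 1 / n : ℝ) ^ n ≤ 1 / Real.exp 1 := by
    rw [one_div (Real.exp 1), ← Real.exp_neg]
    exact Real.one_sub_div_pow_le_exp_neg (by linarith)
  have hcoef : (2 * n + 1) / n ≤ (21 / 10 : ℝ) := by rw [div_le_iff₀ hn0]; linarith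
  have hfrac : (10 / 11 : ℝ) ≤ n / (n + 1) := by
    rw [div_le_div_iff₀ (by norm_num) (by linarith)]; linarith
  have he : 1 / Real.exp 1 < 10 / 27 := by
    rw [div_lt_div_iff₀ (Real.exp_pos 1) (by norm_num)]
    linarith [Real.exp_one_gt_d9]
  have hq0 : (0 : ℝ) ≤ 1 - 1 / n := by rw [sub_nonneg, div_le_one hn0]; linarith
  gcongr
  linarith

end ProbabilityTheory

theorem stmt_11_general {Ω α : Type*} [MeasurableSpace Ω] [MeasurableSpace α]
    [MeasurableSingletonClass α]
    (P : Measure Ω) (n : ℕ) (hn : 10 ≤ n)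
    (x : Fin n → α)
    (X : Fin n → Ω → α) (hXm : ∀ i, Measurable (X i))
    (hindep : iIndepFun X P)
    (hdist : ∀ i k, P {ω | X i ω = x k} = (n : ENNReal)⁻¹) :
    (∑ k : Fin n, (1 / n : ℝ) *
        ∫ ω, (if 0 < (∑ i, if X i ω = x k then 1 else 0 : ℕ) then
            (1 : ℝ) / (∑ i, if X i ω = x k then 1 else 0 : ℕ) else 0) ∂P)
      ≥ ((n : ℝ) / (n + 1)) * (1 - ((2 * n + 1) / n) * (1 - 1 / n) ^ n) ∧
    (∑ k : Fin n, (1 / n : ℝ) *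
        ∫ ω, (if 0 < (∑ i, if X i ω = x k then 1 else 0 : ℕ) then
            (1 : ℝ) / (∑ i, if X i ω = x k then 1 else 0 : ℕ) else 0) ∂P)
      ≥ (10 / 11) * (1 - (21 / 10) * (1 / Real.exp 1)) := by
  have hn0 : (0 : ℝ) < n := by norm_cast; omega
  let p : I := ⟨1 / n, by positivity, by rw [div_le_one hn0]; norm_cast; omega⟩
  have hlaw (k : Fin n) :
      HasLaw (fun ω ↦ #({i | X i ω = x k} : Finset (Fin n))) Bin(n, p) P := by
    have hp (i : Fin n) : P.real (X i ⁻¹' {x k}) = p := by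
      simp [measureReal_def, Set.preimage, hdist, p]
    simpa using (hindep.iIndepSet_preimage fun _ ↦ measurableSet_singleton (x k))
      |>.hasLaw_card_binomial (fun i ↦ hXm i (measurableSet_singleton _)) hp
  have hmean (k : Fin n) : ((n : ℝ) / (n + 1)) * (1 - ((2 * n + 1) / n) * (1 - 1 / n) ^ n) ≤
      ∫ ω, (if 0 < (∑ i, if X i ω = x k then 1 else 0 : ℕ) then
            (1 : ℝ) / (∑ i, if X i ω = x k then 1 else 0 : ℕ) else 0) ∂P := by
    simp_rw [Nat.ite_pos_one_div_eq_inv, ← card_filter]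
    exact (integral_binomial_inv_ge_of_eq_one_div n (by omega) p rfl).trans_eq
      ((hlaw k).integral_comp .of_discrete).symm
  have hsum := Finset.sum_le_sum fun k (_ : k ∈ univ) ↦
    mul_le_mul_of_nonneg_left (hmean k) (by positivity : (0 : ℝ) ≤ 1 / n)
  rw [sum_const, card_univ, Fintype.card_fin, nsmul_eq_mul, ← mul_assoc,
    mul_one_div_cancel hn0.ne', one_mul] at hsum
  exact ⟨hsum, (ten_div_eleven_mul_le n hn).trans hsum⟩

/-- The binomial expectation lower bound used in the proof of Theorem 2:
for i.i.d. `X₁,…,Xₙ` uniform on `n` distinct points `x₁,…,xₙ`,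
`Σ_k (1/n)·E[1/N_k · 1_{N_k>0}] ≥ (n/(n+1))·(1 − ((2n+1)/n)(1−1/n)ⁿ)`,
which is at least `(10/11)·(1 − (21/10)/e)` for `n ≥ 10`.
Here `N_k = Σ_i 1_{X_i = x_k}`. -/
theorem stmt_11 {Ω α : Type*} [MeasurableSpace Ω] [MeasurableSpace α]
    [MeasurableSingletonClass α]
    (P : Measure Ω) [IsProbabilityMeasure P] (n : ℕ) (hn : 10 ≤ n)
    (x : Fin n → α) (hx : Function.Injective x)
    (X : Fin n → Ω → α) (hXm : ∀ i, Measurable (X i))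
    (hindep : iIndepFun X P)
    (hdist : ∀ i k, P {ω | X i ω = x k} = (n : ENNReal)⁻¹) :
    (∑ k : Fin n, (1 / n : ℝ) *
        ∫ ω, (if 0 < (∑ i, if X i ω = x k then 1 else 0 : ℕ) then
            (1 : ℝ) / (∑ i, if X i ω = x k then 1 else 0 : ℕ) else 0) ∂P)
      ≥ ((n : ℝ) / (n + 1)) * (1 - ((2 * n + 1) / n) * (1 - 1 / n) ^ n) ∧
    (∑ k : Fin n, (1 / n : ℝ) *
        ∫ ω, (if 0 < (∑ i, if X i ω = x k then 1 else 0 : ℕ) then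
            (1 : ℝ) / (∑ i, if X i ω = x k then 1 else 0 : ℕ) else 0) ∂P)
      ≥ (10 / 11) * (1 - (21 / 10) * (1 / Real.exp 1)) :=
  stmt_11_general P n hn x X hXm hindep hdist
end
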